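/- arXiv:1407.5206 — 3 statements merged into one kernel-verified Lean document; each statement's English description precedes it below -/
import Mathlib

section
/- Let Λ be a finite-dimensional algebra and M an ab-projective Λ-module, i.e., M is a projective object of ab(M). Then stat M = cok M: a module N is M-static if and only if N is the cokernel of a map M'' → M' with M', M'' ∈ add M. -/
/-!
Let `q : Mᵇ → N` be a right `add M`-approximation. Modulo the defining relations of
`M ⊗_{End M} Hom(M, N)`, every tensor equals `∑ⱼ wⱼ ⊗ q ιⱼ` for some `w ∈ Mᵇ`, and this tensor
evaluates to `q w`. Hence `N` is `M`-static iff `q` is onto and `ker q` is the trace of `M` in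
`ker q`; for the inclusion `ker q ≤ trace` one pushes the relations to `Mᵇ / trace` along
`m ⊗ ψ ↦ (lift of ψ) m`.

Over a finite-dimensional algebra an approximation exists and the trace is the image of some
`Mᵃ → Mᵇ`, so static modules are in `cok M`. Conversely, the cokernel `q` of `f : Mᵃ → Mᵇ` lies in
`ab M`, so ab-projectivity of `M` makes `q` an approximation, and `range f` lies in the trace.
-/

open TensorProduct LinearMap

section StaticDefs
variable (R : Type) [Ring R] (M : Type) [AddCommGroup M] [Module R M]
variable (N : Type) [AddCommGroup N] [Module R N]

/-- The evaluation map `M ⊗[ℤ] Hom_R(M,N) → N`. -/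
noncomputable def evalTensor : (M ⊗[ℤ] (M →ₗ[R] N)) →ₗ[ℤ] N :=
  TensorProduct.lift (LinearMap.mk₂ ℤ (fun m f => f m)
    (fun m m' f => by simp) (fun z m f => by simp)
    (fun m f g => rfl) (fun z m f => rfl))

/-- The subgroup of relations defining `M ⊗_{End(M)ᵒᵖ} Hom(M,N)` as a quotient
of `M ⊗[ℤ] Hom(M,N)`. -/
noncomputable def staticRel : AddSubgroup (M ⊗[ℤ] (M →ₗ[R] N)) :=
  AddSubgroup.closure {x | ∃ (e : M →ₗ[R] M) (m : M) (f : M →ₗ[R] N),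
    x = e m ⊗ₜ[ℤ] f - m ⊗ₜ[ℤ] (f ∘ₗ e)}

/-- `N` is `M`-static: the canonical map `μ_N : M ⊗_{End(M)ᵒᵖ} Hom(M,N) → N`
is an isomorphism; equivalently (since the relations are contained in the kernel of
evaluation), the evaluation map is surjective and its kernel consists of relations. -/
def IsStatic : Prop :=
  Function.Surjective (evalTensor R M N) ∧
    ∀ x, evalTensor R M N x = 0 → x ∈ staticRel R M N

/-- `M'` belongs to `add M`: it is a direct summand of a finite direct sum of copies of `M`. -/
def InAdd (M' : Type) [AddCommGroup M'] [Module R M'] : Prop :=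
  ∃ (n : ℕ) (i : M' →ₗ[R] (Fin n → M)) (p : (Fin n → M) →ₗ[R] M'),
    p ∘ₗ i = LinearMap.id

/-- `N` is generated by `M`: an epimorphic image of a finite direct sum of copies of `M`. -/
def GeneratedBy : Prop :=
  ∃ (n : ℕ) (g : (Fin n → M) →ₗ[R] N), Function.Surjective g

end StaticDefs


open CategoryTheory Limits

instance (priority := 100) abelian_hasFiniteBiproducts {C : Type*} [CategoryTheory.Category C] [CategoryTheory.Abelian C] :
    CategoryTheory.Limits.HasFiniteBiproducts C :=
  CategoryTheory.Limits.HasFiniteBiproducts.of_hasFiniteProducts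

section CatDefs
variable {C : Type*} [Category C] [Abelian C]

/-- `X` belongs to `add M`: it is a retract of a finite direct sum of copies of `M`. -/
def CatInAdd (M X : C) : Prop :=
  ∃ (n : ℕ) (s : X ⟶ ⨁ (fun _ : Fin n => M)) (r : (⨁ (fun _ : Fin n => M)) ⟶ X),
    s ≫ r = 𝟙 X

/-- A (strictly full) exact abelian subcategory of an abelian category:
a class of objects closed under isomorphisms, containing the zero objects and
closed under kernels, cokernels and finite direct sums. -/
structure IsExactAbelianSub (P : C → Prop) : Prop where
  iso : ∀ {X Y : C}, (X ≅ Y) → P X → P Y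
  zero : ∀ Z : C, IsZero Z → P Z
  ker : ∀ {X Y : C} (f : X ⟶ Y), P X → P Y → P (kernel f)
  coker : ∀ {X Y : C} (f : X ⟶ Y), P X → P Y → P (cokernel f)
  sum : ∀ {X Y : C}, P X → P Y → P (X ⊞ Y)

/-- `ab M`: the smallest exact abelian subcategory containing `M`. -/
def abSub (M : C) (X : C) : Prop :=
  ∀ P : C → Prop, IsExactAbelianSub P → P M → P X

/-- `G` is a projective object relative to the subcategory `P`. -/
def ProjIn (P : C → Prop) (G : C) : Prop :=
  P G ∧ ∀ (X Y : C), P X → P Y → ∀ (e : X ⟶ Y), Epi e →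
    ∀ f : G ⟶ Y, ∃ g : G ⟶ X, g ≫ e = f

/-- `M` is ab-projective: projective as an object of `ab M`. -/
def AbProjective (M : C) : Prop := ProjIn (abSub M) M

/-- relative simple objects of the subcategory `P`. -/
def RelSimple (P : C → Prop) (X : C) : Prop :=
  P X ∧ ¬ IsZero X ∧
    ∀ (Y : C) (i : Y ⟶ X), Mono i → P Y → IsZero Y ∨ IsIso i

/-- `X` has a filtration of length `n` inside the subcategory `P` whose
consecutive quotients satisfy `Q`. -/
def HasFiltration (P Q : C → Prop) (X : C) (n : ℕ) : Prop :=
  ∃ (F : Fin (n+1) → C) (g : ∀ i : Fin n, F i.castSucc ⟶ F i.succ),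
    IsZero (F 0) ∧ Nonempty (F (Fin.last n) ≅ X) ∧
    ∀ i : Fin n, Mono (g i) ∧ P (F i.castSucc) ∧ P (F i.succ) ∧ Q (cokernel (g i))

/-- relative semisimple objects: finite direct sums of relative simples. -/
def RelSemisimple (P : C → Prop) (X : C) : Prop :=
  ∃ (m : ℕ) (s : Fin m → C), (∀ i, RelSimple P (s i)) ∧ Nonempty (X ≅ ⨁ s)

end CatDefs

section Static

variable {R : Type} [Ring R] {M : Type} [AddCommGroup M] [Module R M]
  {N : Type} [AddCommGroup N] [Module R N] {b : ℕ}

lemma evalTensor_tmul (m : M) (f : M →ₗ[R] N) : evalTensor R M N (m ⊗ₜ[ℤ] f) = f m := rfl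

lemma evalTensor_eq_zero_of_mem_staticRel {x : M ⊗[ℤ] (M →ₗ[R] N)}
    (hx : x ∈ staticRel R M N) : evalTensor R M N x = 0 := by
  induction hx using AddSubgroup.closure_induction with
  | mem x hx =>
    obtain ⟨e, m, f, rfl⟩ := hx
    simp [evalTensor_tmul]
  | zero => simp
  | add x y _ _ hx hy => simp [hx, hy]
  | neg x _ hx => simp [hx]

/-- `q` is a right `add M`-approximation of `N`. -/
def IsAddApprox (q : (Fin b → M) →ₗ[R] N) : Prop :=
  ∀ ψ : M →ₗ[R] N, ∃ g : M →ₗ[R] (Fin b → M), q ∘ₗ g = ψ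

/-- The trace of `M` in `ker q`. -/
def kerTrace (q : (Fin b → M) →ₗ[R] N) : Submodule R (Fin b → M) :=
  ⨆ g : {g : M →ₗ[R] (Fin b → M) // q ∘ₗ g = 0}, LinearMap.range g.1

def coordTensor (q : (Fin b → M) →ₗ[R] N) : (Fin b → M) →+ M ⊗[ℤ] (M →ₗ[R] N) where
  toFun w := ∑ j, w j ⊗ₜ[ℤ] (q ∘ₗ LinearMap.single R (fun _ => M) j)
  map_zero' := by simp
  map_add' v w := by simp [add_tmul, Finset.sum_add_distrib]

lemma coordTensor_apply (q : (Fin b → M) →ₗ[R] N) (w : Fin b → M) :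
    coordTensor q w = ∑ j, w j ⊗ₜ[ℤ] (q ∘ₗ LinearMap.single R (fun _ => M) j) := rfl

section kerTrace

variable {q : (Fin b → M) →ₗ[R] N}

lemma apply_mem_kerTrace {g : M →ₗ[R] (Fin b → M)} (hg : q ∘ₗ g = 0) (m : M) :
    g m ∈ kerTrace q :=
  Submodule.mem_iSup_of_mem (⟨g, hg⟩ : {g : M →ₗ[R] (Fin b → M) // q ∘ₗ g = 0})
    (LinearMap.mem_range_self g m)

lemma mkQ_kerTrace_eq_of_comp_eq {g g' : M →ₗ[R] (Fin b → M)} (h : q ∘ₗ g = q ∘ₗ g') (m : M) :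
    (kerTrace q).mkQ (g m) = (kerTrace q).mkQ (g' m) :=
  (Submodule.Quotient.eq _).2 <|
    apply_mem_kerTrace (g := g - g') (by rw [LinearMap.comp_sub, h, sub_self]) m

variable (q) in
lemma kerTrace_le_ker : kerTrace q ≤ LinearMap.ker q :=
  iSup_le fun g => LinearMap.range_le_ker_iff.2 g.2

lemma range_le_kerTrace {a : ℕ} {f : (Fin a → M) →ₗ[R] (Fin b → M)} (hf : q ∘ₗ f = 0) :
    LinearMap.range f ≤ kerTrace q := by
  rintro _ ⟨u, rfl⟩
  rw [← Finset.univ_sum_single u, map_sum]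
  refine Submodule.sum_mem _ fun i _ => ?_
  exact apply_mem_kerTrace (g := f ∘ₗ LinearMap.single R (fun _ => M) i)
    (by rw [← LinearMap.comp_assoc, hf, LinearMap.zero_comp]) (u i)

end kerTrace

variable (q : (Fin b → M) →ₗ[R] N)

lemma evalTensor_coordTensor (w : Fin b → M) : evalTensor R M N (coordTensor q w) = q w := by
  rw [coordTensor_apply, map_sum]
  simp only [evalTensor_tmul, LinearMap.comp_apply, LinearMap.coe_single]
  rw [← map_sum, Finset.univ_sum_single]

lemma tmul_comp_sub_coordTensor_mem_staticRel (g : M →ₗ[R] (Fin b → M)) (m : M) :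
    m ⊗ₜ[ℤ] (q ∘ₗ g) - coordTensor q (g m) ∈ staticRel R M N := by
  have hdecomp : q ∘ₗ g = ∑ j, (q ∘ₗ LinearMap.single R (fun _ => M) j) ∘ₗ
      ((LinearMap.proj j : (Fin b → M) →ₗ[R] M) ∘ₗ g) := by
    ext m'
    simp only [LinearMap.comp_apply, LinearMap.sum_apply, LinearMap.proj_apply,
      LinearMap.coe_single]
    rw [← map_sum, Finset.univ_sum_single]
  rw [hdecomp, tmul_sum, coordTensor_apply, ← Finset.sum_sub_distrib]
  refine sum_mem fun j _ => ?_
  rw [← neg_mem_iff, neg_sub]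
  exact AddSubgroup.subset_closure ⟨_, m, _, rfl⟩

variable {q}

lemma coordTensor_mem_staticRel_of_mem_kerTrace {w : Fin b → M} (hw : w ∈ kerTrace q) :
    coordTensor q w ∈ staticRel R M N := by
  induction hw using Submodule.iSup_induction' with
  | mem g w hw =>
    obtain ⟨m, rfl⟩ := hw
    simpa [g.2] using tmul_comp_sub_coordTensor_mem_staticRel q g.1 m
  | zero => simp
  | add v w _ _ hv hw => simpa using add_mem hv hw

namespace IsAddApprox

lemma exists_sub_coordTensor_mem_staticRel (hq : IsAddApprox q) (x : M ⊗[ℤ] (M →ₗ[R] N)) :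
    ∃ w, x - coordTensor q w ∈ staticRel R M N := by
  induction x using TensorProduct.induction_on with
  | zero => exact ⟨0, by simp⟩
  | tmul m ψ =>
    obtain ⟨g, rfl⟩ := hq ψ
    exact ⟨g m, tmul_comp_sub_coordTensor_mem_staticRel q g m⟩
  | add x y hx hy =>
    obtain ⟨v, hv⟩ := hx
    obtain ⟨w, hw⟩ := hy
    exact ⟨v + w, by simpa [add_sub_add_comm] using add_mem hv hw⟩

/-- `m ⊗ ψ ↦ g m` for a lift `g` of `ψ` through `q`: two lifts differ by a map `M → ker q`. -/
noncomputable def descend (hq : IsAddApprox q) :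
    M ⊗[ℤ] (M →ₗ[R] N) →ₗ[ℤ] (Fin b → M) ⧸ kerTrace q :=
  TensorProduct.lift <| LinearMap.mk₂ ℤ (fun m ψ => (kerTrace q).mkQ ((hq ψ).choose m))
    (fun m m' ψ => by simp only [map_add])
    (fun z m ψ => by simp only [map_zsmul])
    (fun m ψ ψ' => by
      rw [← map_add, ← LinearMap.add_apply]
      refine mkQ_kerTrace_eq_of_comp_eq ?_ m
      rw [LinearMap.comp_add, (hq ψ).choose_spec, (hq ψ').choose_spec, (hq (ψ + ψ')).choose_spec])
    (fun z m ψ => by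
      rw [← map_zsmul, ← LinearMap.smul_apply]
      refine mkQ_kerTrace_eq_of_comp_eq ?_ m
      rw [LinearMap.comp_smul, (hq ψ).choose_spec, (hq (z • ψ)).choose_spec])

lemma descend_tmul (hq : IsAddApprox q) {g : M →ₗ[R] (Fin b → M)} {ψ : M →ₗ[R] N}
    (hg : q ∘ₗ g = ψ) (m : M) :
    hq.descend (m ⊗ₜ[ℤ] ψ) = (kerTrace q).mkQ (g m) :=
  mkQ_kerTrace_eq_of_comp_eq ((hq ψ).choose_spec.trans hg.symm) m

lemma descend_eq_zero_of_mem_staticRel (hq : IsAddApprox q) {x : M ⊗[ℤ] (M →ₗ[R] N)}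
    (hx : x ∈ staticRel R M N) :
    hq.descend x = 0 := by
  induction hx using AddSubgroup.closure_induction with
  | mem x hx =>
    obtain ⟨e, m, ψ, rfl⟩ := hx
    obtain ⟨g, rfl⟩ := hq ψ
    rw [map_sub, hq.descend_tmul rfl, hq.descend_tmul (LinearMap.comp_assoc e g q).symm,
      LinearMap.comp_apply, sub_self]
  | zero => simp
  | add x y _ _ hx hy => simp [hx, hy]
  | neg x _ hx => simp [hx]

lemma descend_coordTensor (hq : IsAddApprox q) (w : Fin b → M) :
    hq.descend (coordTensor q w) = (kerTrace q).mkQ w := by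
  rw [coordTensor_apply, map_sum]
  simp only [hq.descend_tmul rfl, LinearMap.coe_single]
  rw [← map_sum, Finset.univ_sum_single]

lemma ker_le_kerTrace (hq : IsAddApprox q)
    (hker : ∀ x, evalTensor R M N x = 0 → x ∈ staticRel R M N) :
    LinearMap.ker q ≤ kerTrace q := by
  intro w hw
  have hrel := hker _ ((evalTensor_coordTensor q w).trans hw)
  rw [← Submodule.Quotient.mk_eq_zero, ← Submodule.mkQ_apply, ← hq.descend_coordTensor]
  exact hq.descend_eq_zero_of_mem_staticRel hrel

theorem isStatic_iff (hq : IsAddApprox q) :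
    IsStatic R M N ↔ Function.Surjective q ∧ LinearMap.ker q ≤ kerTrace q := by
  constructor
  · rintro ⟨hsurj, hker⟩
    refine ⟨fun n => ?_, hq.ker_le_kerTrace hker⟩
    obtain ⟨x, rfl⟩ := hsurj n
    obtain ⟨w, hw⟩ := hq.exists_sub_coordTensor_mem_staticRel x
    refine ⟨w, ?_⟩
    rw [← evalTensor_coordTensor, ← sub_eq_zero, ← map_sub, ← neg_sub, map_neg, neg_eq_zero]
    exact evalTensor_eq_zero_of_mem_staticRel hw
  · rintro ⟨hsurj, hker⟩
    refine ⟨fun n => ?_, fun x hx => ?_⟩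
    · obtain ⟨w, rfl⟩ := hsurj n
      exact ⟨coordTensor q w, evalTensor_coordTensor q w⟩
    · obtain ⟨w, hw⟩ := hq.exists_sub_coordTensor_mem_staticRel x
      have hqw : q w = 0 := by
        rw [← evalTensor_coordTensor, ← sub_sub_cancel x (coordTensor q w), map_sub, hx,
          evalTensor_eq_zero_of_mem_staticRel hw, sub_zero]
      simpa using add_mem hw (coordTensor_mem_staticRel_of_mem_kerTrace (hker hqw))

end IsAddApprox

end Static

section AbSub

variable {Λ : Type} [Ring Λ] {M : Type} [AddCommGroup M] [Module Λ M]

lemma IsExactAbelianSub.pi {P : ModuleCat Λ → Prop} (hP : IsExactAbelianSub P)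
    (hM : P (ModuleCat.of Λ M)) (n : ℕ) : P (ModuleCat.of Λ (Fin n → M)) := by
  induction n with
  | zero => exact hP.zero _ (ModuleCat.isZero_of_subsingleton _)
  | succ n ih =>
    refine hP.iso ?_ (hP.sum hM ih)
    exact (ModuleCat.biprodIsoProd _ _).trans
      (Fin.consLinearEquiv Λ (fun _ : Fin (n + 1) => M)).toModuleIso

variable {N : Type} [AddCommGroup N] [Module Λ N] {a b : ℕ}
  {f : (Fin a → M) →ₗ[Λ] (Fin b → M)} {q : (Fin b → M) →ₗ[Λ] N}

lemma abSub_of_range_eq_ker (hq : Function.Surjective q)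
    (hfq : LinearMap.range f = LinearMap.ker q) :
    abSub (ModuleCat.of Λ M) (ModuleCat.of Λ N) := fun _ hP hM =>
  hP.iso ((ModuleCat.cokernelIsoRangeQuotient (ModuleCat.ofHom f)).trans
      ((Submodule.quotEquivOfEq _ _ hfq).trans (q.quotKerEquivOfSurjective hq)).toModuleIso)
    (hP.coker (ModuleCat.ofHom f) (hP.pi hM a) (hP.pi hM b))

lemma AbProjective.isAddApprox (hproj : AbProjective (ModuleCat.of Λ M))
    (hq : Function.Surjective q) (hfq : LinearMap.range f = LinearMap.ker q) :
    IsAddApprox q := by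
  intro ψ
  have : Epi (ModuleCat.ofHom q) := (ModuleCat.epi_iff_surjective _).2 hq
  obtain ⟨g, hg⟩ := hproj.2 _ _ (fun _ hP hM => hP.pi hM b) (abSub_of_range_eq_ker hq hfq)
    (ModuleCat.ofHom q) this (ModuleCat.ofHom ψ)
  exact ⟨g.hom, congrArg ModuleCat.Hom.hom hg⟩

end AbSub

section FiniteHom

variable (k : Type) [CommRing k] {Λ : Type} [Ring Λ] [Algebra k Λ]
  {M : Type} [AddCommGroup M] [Module Λ M] [Module k M] [IsScalarTower k Λ M]
  {N : Type} [AddCommGroup N] [Module Λ N] [Module k N] [IsScalarTower k Λ N]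

lemma exists_isAddApprox [Module.Finite k (M →ₗ[Λ] N)] :
    ∃ (b : ℕ) (q : (Fin b → M) →ₗ[Λ] N), IsAddApprox q := by
  obtain ⟨b, φ, hφ⟩ := Module.Finite.exists_fin (R := k) (M := M →ₗ[Λ] N)
  refine ⟨b, ∑ j, φ j ∘ₗ LinearMap.proj j, fun ψ => ?_⟩
  obtain ⟨c, rfl⟩ :=
    (Submodule.mem_span_range_iff_exists_fun k).1 (hφ ▸ Submodule.mem_top (x := ψ))
  refine ⟨LinearMap.pi fun j => c j • LinearMap.id, ?_⟩
  ext m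
  simp

lemma exists_range_eq_kerTrace {b : ℕ} [IsNoetherian k (M →ₗ[Λ] (Fin b → M))]
    (q : (Fin b → M) →ₗ[Λ] N) :
    ∃ (a : ℕ) (f : (Fin a → M) →ₗ[Λ] (Fin b → M)), LinearMap.range f = kerTrace q := by
  obtain ⟨a, g, hg⟩ := Submodule.fg_iff_exists_fin_generating_family.1
    (IsNoetherian.noetherian (LinearMap.ker (LinearMap.compRight k q (M := M))))
  have hgq (i : Fin a) : q ∘ₗ g i = 0 :=
    LinearMap.mem_ker.1 (hg ▸ Submodule.subset_span (Set.mem_range_self i))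
  refine ⟨a, ∑ i, g i ∘ₗ LinearMap.proj i,
    le_antisymm (range_le_kerTrace ?_) (iSup_le fun g₀ => ?_)⟩
  · refine LinearMap.ext fun u => ?_
    simp only [LinearMap.comp_apply, LinearMap.sum_apply, map_sum, LinearMap.zero_apply]
    exact Finset.sum_eq_zero fun i _ => LinearMap.congr_fun (hgq i) _
  · obtain ⟨c, hc⟩ := (Submodule.mem_span_range_iff_exists_fun k).1 (hg ▸ g₀.2 :
      g₀.1 ∈ Submodule.span k (Set.range g))
    rintro _ ⟨m, rfl⟩
    exact ⟨fun i => c i • m, by simp [← hc]⟩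

end FiniteHom

section Stmt11
open CategoryTheory Limits

/-- Let `Λ` be a finite-dimensional algebra and `M` an ab-projective
finite-dimensional `Λ`-module (projective as an object of `ab M`). Then `stat M = cok M`:
a finite-dimensional module `N` is `M`-static if and only if it is the cokernel of a map
between objects of `add M` (equivalently, of a map between finite direct powers of `M`). -/
theorem stat_eq_cok_of_abProjective
    (k : Type) [Field k] (Λ : Type) [Ring Λ] [Algebra k Λ] [FiniteDimensional k Λ]
    (M : Type) [AddCommGroup M] [Module Λ M] [Module.Finite Λ M]
    (hproj : AbProjective (ModuleCat.of Λ M)) :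
    ∀ (N : Type) (_ : AddCommGroup N) (_ : Module Λ N) (_ : Module.Finite Λ N),
      IsStatic Λ M N ↔
        ∃ (a b : ℕ) (f : (Fin a → M) →ₗ[Λ] (Fin b → M)) (q : (Fin b → M) →ₗ[Λ] N),
          Function.Surjective q ∧ LinearMap.range f = LinearMap.ker q := by
  intro N _ _ _
  constructor
  · intro hstat
    let : Module k M := Module.compHom M (algebraMap k Λ)
    let : Module k N := Module.compHom N (algebraMap k Λ)
    have : IsScalarTower k Λ M := .of_algebraMap_smul fun _ _ => rfl
    have : IsScalarTower k Λ N := .of_algebraMap_smul fun _ _ => rfl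
    have : Module.Finite k M := Module.Finite.trans Λ M
    have : Module.Finite k N := Module.Finite.trans Λ N
    obtain ⟨b, q, hq⟩ := exists_isAddApprox k (Λ := Λ) (M := M) (N := N)
    obtain ⟨hsurj, hker⟩ := hq.isStatic_iff.1 hstat
    obtain ⟨a, f, hf⟩ := exists_range_eq_kerTrace k q
    exact ⟨a, b, f, q, hsurj, hf.trans (le_antisymm (kerTrace_le_ker q) hker)⟩
  · rintro ⟨a, b, f, q, hq, hfq⟩
    exact (hproj.isAddApprox hq hfq).isStatic_iff.2
      ⟨hq, hfq ▸ range_le_kerTrace (LinearMap.range_le_ker_iff.1 hfq.le)⟩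

end Stmt11
end

section
/- Let Λ be a finite-dimensional algebra and M an ab-projective Λ-module with Γ = End(M)^op. Then every finite-dimensional Γ-module X is M-adstatic: the unit ν_X : X → Hom(M, M ⊗_Γ X) is an isomorphism, i.e., adstat M = mod Γ(M). -/
open TensorProduct LinearMap

section AdstaticDefs
variable (R : Type) [Ring R] (M : Type) [AddCommGroup M] [Module R M]

/-- The relations defining `M ⊗_{Γ(M)} X` as a quotient of `M ⊗[ℤ] X`,
where `Γ(M) = End_R(M)ᵒᵖ`. (The relation set is stable under the `R`-action
on the left tensor factor, so the `R`-span agrees with the additive closure.) -/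
noncomputable def adRel (X : Type) [AddCommGroup X]
    [Module (Module.End R M)ᵐᵒᵖ X] : Submodule R (M ⊗[ℤ] X) :=
  Submodule.span R {y | ∃ (e : Module.End R M) (m : M) (x : X),
    y = e m ⊗ₜ[ℤ] x - m ⊗ₜ[ℤ] ((MulOpposite.op e) • x)}

/-- `M ⊗_{Γ(M)} X`, realized as a quotient of `M ⊗[ℤ] X`, as an `R`-module. -/
noncomputable def TensorOver (X : Type) [AddCommGroup X]
    [Module (Module.End R M)ᵐᵒᵖ X] : Type :=
  (M ⊗[ℤ] X) ⧸ adRel R M X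

noncomputable instance (X : Type) [AddCommGroup X] [Module (Module.End R M)ᵐᵒᵖ X] :
    AddCommGroup (TensorOver R M X) :=
  inferInstanceAs (AddCommGroup ((M ⊗[ℤ] X) ⧸ adRel R M X))

noncomputable instance (X : Type) [AddCommGroup X] [Module (Module.End R M)ᵐᵒᵖ X] :
    Module R (TensorOver R M X) :=
  inferInstanceAs (Module R ((M ⊗[ℤ] X) ⧸ adRel R M X))

/-- The unit `ν_X : X → Hom_R(M, M ⊗_{Γ(M)} X)`, `x ↦ (m ↦ m ⊗ x)`. -/
noncomputable def adUnit (X : Type) [AddCommGroup X]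
    [Module (Module.End R M)ᵐᵒᵖ X] (x : X) : M →ₗ[R] TensorOver R M X where
  toFun := fun m => Submodule.Quotient.mk (m ⊗ₜ[ℤ] x)
  map_add' := by
    intro m m'
    show Submodule.Quotient.mk ((m + m') ⊗ₜ[ℤ] x) = _
    rw [TensorProduct.add_tmul]
    rfl
  map_smul' := by
    intro r m
    show Submodule.Quotient.mk ((r • m) ⊗ₜ[ℤ] x) = _
    rw [← TensorProduct.smul_tmul']
    rfl

/-- The induced `R`-linear map `M ⊗_{Γ(M)} X → M ⊗_{Γ(M)} Y` of a `Γ(M)`-linear map. -/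
noncomputable def tensorOverMap (X Y : Type) [AddCommGroup X]
    [Module (Module.End R M)ᵐᵒᵖ X] [AddCommGroup Y] [Module (Module.End R M)ᵐᵒᵖ Y]
    (φ : X →ₗ[(Module.End R M)ᵐᵒᵖ] Y) :
    TensorOver R M X →ₗ[R] TensorOver R M Y :=
  Submodule.mapQ (adRel R M X) (adRel R M Y)
    (TensorProduct.AlgebraTensorModule.map (LinearMap.id : M →ₗ[R] M)
      (φ.toAddMonoidHom.toIntLinearMap))
    (by
      refine Submodule.span_le.2 ?_
      rintro y ⟨e, m, x, rfl⟩
      simp only [SetLike.mem_coe, Submodule.mem_comap, map_sub,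
        TensorProduct.AlgebraTensorModule.map_tmul, LinearMap.id_apply,
        AddMonoidHom.coe_toIntLinearMap, LinearMap.toAddMonoidHom_coe]
      have : φ ((MulOpposite.op e) • x) = (MulOpposite.op e) • φ x := map_smul φ _ _
      rw [this]
      exact Submodule.subset_span ⟨e, m, φ x, rfl⟩)

end AdstaticDefs


open CategoryTheory Limits

/-! Write `Γ = End_Λ(M)ᵒᵖ`; it is finite-dimensional, hence noetherian, so `X` has a finite
presentation `Γᵐ → Γⁿ → X → 0`. The functor `M ⊗_Γ -` is right exact and sends `Γⁿ` to `Mⁿ`,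
giving an exact sequence `Mᵐ → Mⁿ → M ⊗_Γ X → 0` inside `ab M`. Since `M` is projective in
`ab M`, applying `Hom_Λ(M, -)` keeps it exact; `ν` is bijective on free modules, so the five
lemma makes `ν_X` bijective. -/

section TensorOver

variable {Λ : Type} [Ring Λ] {M : Type} [AddCommGroup M] [Module Λ M]

theorem coe_algebraTensorModuleMap_id {X Y : Type} [AddCommGroup X] [AddCommGroup Y]
    (φ : X →ₗ[ℤ] Y) :
    ⇑(AlgebraTensorModule.map (LinearMap.id : M →ₗ[Λ] M) φ) = LinearMap.lTensor M φ :=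
  congrArg DFunLike.coe (TensorProduct.ext' fun _ _ => rfl :
    (AlgebraTensorModule.map (LinearMap.id : M →ₗ[Λ] M) φ).restrictScalars ℤ =
      LinearMap.lTensor M φ)

variable {X Y Z : Type} [AddCommGroup X] [Module (Module.End Λ M)ᵐᵒᵖ X]
  [AddCommGroup Y] [Module (Module.End Λ M)ᵐᵒᵖ Y] [AddCommGroup Z] [Module (Module.End Λ M)ᵐᵒᵖ Z]

theorem tensorOverMap_comp_adUnit (φ : X →ₗ[(Module.End Λ M)ᵐᵒᵖ] Y) (x : X) :
    tensorOverMap Λ M X Y φ ∘ₗ adUnit Λ M X x = adUnit Λ M Y (φ x) :=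
  rfl

theorem adUnit_apply_end_apply (x : X) (e : Module.End Λ M) (m : M) :
    adUnit Λ M X x (e m) = adUnit Λ M X (MulOpposite.op e • x) m :=
  (Submodule.Quotient.eq _).2 (Submodule.subset_span ⟨e, m, x, rfl⟩)

variable (Λ M X) in
noncomputable def adUnitHom : X →+ (M →ₗ[Λ] TensorOver Λ M X) where
  toFun := adUnit Λ M X
  map_zero' := LinearMap.ext fun m => congrArg Submodule.Quotient.mk (tmul_zero _ m)
  map_add' x y := LinearMap.ext fun m => congrArg Submodule.Quotient.mk (tmul_add m x y)

theorem adRel_le_map_of_surjective (ψ : Y →ₗ[(Module.End Λ M)ᵐᵒᵖ] Z)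
    (hψ : Function.Surjective ψ) :
    adRel Λ M Z ≤ (adRel Λ M Y).map
      (AlgebraTensorModule.map (LinearMap.id : M →ₗ[Λ] M) ψ.toAddMonoidHom.toIntLinearMap) := by
  refine Submodule.span_le.2 ?_
  rintro _ ⟨e, m, z, rfl⟩
  obtain ⟨y, rfl⟩ := hψ z
  refine ⟨_, Submodule.subset_span ⟨e, m, y, rfl⟩, ?_⟩
  simp [map_smul ψ]

theorem tensorOverMap_surjective (ψ : Y →ₗ[(Module.End Λ M)ᵐᵒᵖ] Z)
    (hψ : Function.Surjective ψ) : Function.Surjective (tensorOverMap Λ M Y Z ψ) := by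
  intro u
  obtain ⟨t, rfl⟩ := Submodule.mkQ_surjective _ u
  obtain ⟨s, rfl⟩ := LinearMap.lTensor_surjective M (g := ψ.toAddMonoidHom.toIntLinearMap) hψ t
  exact ⟨Submodule.mkQ _ s, congrArg (Submodule.mkQ _)
    (congrFun (coe_algebraTensorModuleMap_id (Λ := Λ) ψ.toAddMonoidHom.toIntLinearMap) s)⟩

theorem tensorOverMap_exact (φ : X →ₗ[(Module.End Λ M)ᵐᵒᵖ] Y) (ψ : Y →ₗ[(Module.End Λ M)ᵐᵒᵖ] Z)
    (hex : Function.Exact φ ψ) (hψ : Function.Surjective ψ) :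
    Function.Exact (tensorOverMap Λ M X Y φ) (tensorOverMap Λ M Y Z ψ) := by
  have hlex : Function.Exact
      (AlgebraTensorModule.map (LinearMap.id : M →ₗ[Λ] M) φ.toAddMonoidHom.toIntLinearMap)
      (AlgebraTensorModule.map (LinearMap.id : M →ₗ[Λ] M) ψ.toAddMonoidHom.toIntLinearMap) := by
    rw [coe_algebraTensorModuleMap_id, coe_algebraTensorModuleMap_id]
    exact lTensor_exact M hex hψ
  exact (hlex.exact_mapQ_iff _ _).2 (inf_le_right.trans (adRel_le_map_of_surjective ψ hψ))

end TensorOver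

section FreeModule

variable {Λ : Type} [Ring Λ] {M : Type} [AddCommGroup M] [Module Λ M] {ι : Type}

variable (Λ M ι) in
noncomputable def tensorOverPiEval :
    TensorOver Λ M (ι → (Module.End Λ M)ᵐᵒᵖ) →ₗ[Λ] (ι → M) :=
  Submodule.liftQ _
    (AlgebraTensorModule.lift (LinearMap.mk₂' Λ ℤ (fun m γ i => (γ i).unop m)
      (fun _ _ _ => funext fun _ => map_add _ _ _) (fun _ _ _ => funext fun _ => map_smul _ _ _)
      (fun _ _ _ => by ext; simp) (fun _ _ _ => by ext; simp)))
    (Submodule.span_le.2 <| by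
      rintro _ ⟨e, m, γ, rfl⟩
      ext i
      simp [Module.End.mul_apply])

theorem tensorOverPiEval_adUnit (γ : ι → (Module.End Λ M)ᵐᵒᵖ) (m : M) :
    tensorOverPiEval Λ M ι (adUnit Λ M _ γ m) = fun i => (γ i).unop m :=
  rfl

variable [Fintype ι] [DecidableEq ι]

variable (Λ M ι) in
noncomputable def tensorOverPiSingle :
    (ι → M) →ₗ[Λ] TensorOver Λ M (ι → (Module.End Λ M)ᵐᵒᵖ) :=
  ∑ i, adUnit Λ M _ (Pi.single i 1) ∘ₗ LinearMap.proj i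

theorem tensorOverPiEval_comp_single :
    tensorOverPiEval Λ M ι ∘ₗ tensorOverPiSingle Λ M ι = LinearMap.id := by
  refine LinearMap.ext fun m => ?_
  simp only [tensorOverPiSingle, LinearMap.comp_apply, LinearMap.sum_apply,
    map_sum, tensorOverPiEval_adUnit, LinearMap.id_apply]
  conv_rhs => rw [← Finset.univ_sum_single m]
  refine Finset.sum_congr rfl fun c _ => funext fun j => ?_
  by_cases h : j = c
  · subst h; simp
  · simp [h]

theorem tensorOverPiSingle_comp_eval :
    tensorOverPiSingle Λ M ι ∘ₗ tensorOverPiEval Λ M ι = LinearMap.id := by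
  refine LinearMap.ext fun u => Submodule.Quotient.induction_on _ u fun t => ?_
  induction t using TensorProduct.induction_on with
  | zero => exact map_zero _
  | add a b ha hb => exact (map_add _ _ _).trans (congrArg₂ (· + ·) ha hb)
  | tmul m γ =>
    show (tensorOverPiSingle Λ M ι ∘ₗ tensorOverPiEval Λ M ι) (adUnit Λ M _ γ m) =
      adUnit Λ M _ γ m
    rw [LinearMap.comp_apply, tensorOverPiEval_adUnit, tensorOverPiSingle, LinearMap.sum_apply]
    simp only [LinearMap.comp_apply, LinearMap.proj_apply, adUnit_apply_end_apply,
      MulOpposite.op_unop, ← Pi.single_smul', smul_eq_mul, mul_one]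
    have hsum := map_sum (adUnitHom Λ M _) (fun i => Pi.single i (γ i)) Finset.univ
    rw [Finset.univ_sum_single] at hsum
    rw [← LinearMap.sum_apply]
    exact (LinearMap.congr_fun hsum m).symm

variable (Λ M ι) in
noncomputable def tensorOverPiEquiv :
    TensorOver Λ M (ι → (Module.End Λ M)ᵐᵒᵖ) ≃ₗ[Λ] (ι → M) :=
  .ofLinearMap _ _ tensorOverPiEval_comp_single tensorOverPiSingle_comp_eval

theorem adUnit_pi_bijective : Function.Bijective (adUnit Λ M (ι → (Module.End Λ M)ᵐᵒᵖ)) := by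
  set e := tensorOverPiEquiv Λ M ι
  have e_adUnit (γ : ι → (Module.End Λ M)ᵐᵒᵖ) (m : M) :
      e (adUnit Λ M _ γ m) = fun i => (γ i).unop m :=
    rfl
  constructor
  · intro γ γ' h
    funext i
    refine MulOpposite.unop_injective (LinearMap.ext fun m => ?_)
    simpa only [e_adUnit] using congrFun (congrArg e (LinearMap.congr_fun h m)) i
  · intro f
    refine ⟨fun i => .op (LinearMap.proj i ∘ₗ e.toLinearMap ∘ₗ f),
      LinearMap.ext fun m => e.injective ?_⟩
    rw [e_adUnit]
    rfl

end FreeModule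

section AbClosure

open CategoryTheory

variable {Λ : Type} [Ring Λ] {M : Type} [AddCommGroup M] [Module Λ M]
  {N N' : Type} [AddCommGroup N] [Module Λ N] [AddCommGroup N'] [Module Λ N']

variable (Λ M) in
def MemAb (N : Type) [AddCommGroup N] [Module Λ N] : Prop :=
  abSub (ModuleCat.of Λ M) (ModuleCat.of Λ N)

variable (Λ M) in
theorem memAb_self : MemAb Λ M M :=
  fun _ _ hM => hM

namespace MemAb

theorem of_linearEquiv (e : N ≃ₗ[Λ] N') (h : MemAb Λ M N) : MemAb Λ M N' :=
  fun P hP hM => hP.iso e.toModuleIso (h P hP hM)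

theorem of_subsingleton [Subsingleton N] : MemAb Λ M N :=
  fun _ hP _ => hP.zero _ (ModuleCat.isZero_of_subsingleton _)

theorem prod (h : MemAb Λ M N) (h' : MemAb Λ M N') : MemAb Λ M (N × N') :=
  fun P hP hM => hP.iso (ModuleCat.biprodIsoProd _ _) (hP.sum (h P hP hM) (h' P hP hM))

theorem pi (h : MemAb Λ M N) (ι : Type) [Finite ι] : MemAb Λ M (ι → N) := by
  induction ι using Finite.induction_empty_option with
  | of_equiv e ih => exact ih.of_linearEquiv (LinearEquiv.funCongrLeft Λ N e.symm)
  | h_empty => exact of_subsingleton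
  | h_option ih => exact (h.prod ih).of_linearEquiv (LinearEquiv.piOptionEquivProd Λ).symm

theorem ker (f : N →ₗ[Λ] N') (h : MemAb Λ M N) (h' : MemAb Λ M N') :
    MemAb Λ M (LinearMap.ker f) :=
  fun P hP hM => hP.iso (ModuleCat.kernelIsoKer (ModuleCat.ofHom f))
    (hP.ker (ModuleCat.ofHom f) (h P hP hM) (h' P hP hM))

theorem quotient_range (f : N →ₗ[Λ] N') (h : MemAb Λ M N) (h' : MemAb Λ M N') :
    MemAb Λ M (N' ⧸ LinearMap.range f) :=
  fun P hP hM => hP.iso (ModuleCat.cokernelIsoRangeQuotient (ModuleCat.ofHom f))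
    (hP.coker (ModuleCat.ofHom f) (h P hP hM) (h' P hP hM))

theorem of_exact {N'' : Type} [AddCommGroup N''] [Module Λ N''] {f : N →ₗ[Λ] N'}
    {g : N' →ₗ[Λ] N''} (hfg : Function.Exact f g) (hg : Function.Surjective g)
    (h : MemAb Λ M N) (h' : MemAb Λ M N') : MemAb Λ M N'' :=
  (quotient_range f h h').of_linearEquiv
    ((Submodule.quotEquivOfEq _ _ hfg.linearMap_ker_eq.symm).trans (g.quotKerEquivOfSurjective hg))

end MemAb

end AbClosure

namespace AbProjective

variable {Λ : Type} [Ring Λ] {M : Type} [AddCommGroup M] [Module Λ M]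
  {A B C : Type} [AddCommGroup A] [Module Λ A] [AddCommGroup B] [Module Λ B]
  [AddCommGroup C] [Module Λ C]

theorem surjective_compRight (hM : AbProjective (ModuleCat.of Λ M)) {g : B →ₗ[Λ] C}
    (hg : Function.Surjective g) (hB : MemAb Λ M B) (hC : MemAb Λ M C) :
    Function.Surjective (LinearMap.compRight ℤ (M := M) g) := by
  intro h
  obtain ⟨l, hl⟩ := hM.2 _ _ hB hC (ModuleCat.ofHom g) ((ModuleCat.epi_iff_surjective _).2 hg)
    (ModuleCat.ofHom h)
  exact ⟨l.hom, congrArg ModuleCat.Hom.hom hl⟩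

theorem exact_compRight (hM : AbProjective (ModuleCat.of Λ M)) {f : A →ₗ[Λ] B}
    {g : B →ₗ[Λ] C} (hfg : Function.Exact f g)
    (hA : MemAb Λ M A) (hB : MemAb Λ M B) (hC : MemAb Λ M C) :
    Function.Exact (LinearMap.compRight ℤ (M := M) f) (LinearMap.compRight ℤ (M := M) g) := by
  intro h
  constructor
  · intro hgh
    have hker (m : M) : h m ∈ LinearMap.ker g := LinearMap.congr_fun hgh m
    have hf : Function.Surjective
        (f.codRestrict (LinearMap.ker g) fun a => hfg.apply_apply_eq_zero a) := by
      rintro ⟨b, hb⟩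
      obtain ⟨a, rfl⟩ := (hfg b).1 hb
      exact ⟨a, rfl⟩
    obtain ⟨l, hl⟩ := hM.surjective_compRight hf hA (MemAb.ker g hB hC)
      (LinearMap.codRestrict _ h hker)
    exact ⟨l, LinearMap.ext fun m => congrArg Subtype.val (LinearMap.congr_fun hl m)⟩
  · rintro ⟨l, rfl⟩
    exact LinearMap.ext fun m => hfg.apply_apply_eq_zero (l m)

end AbProjective

theorem isNoetherianRing_mulOpposite_end (k : Type) [Field k] (Λ : Type) [Ring Λ] [Algebra k Λ]
    [FiniteDimensional k Λ] (M : Type) [AddCommGroup M] [Module Λ M] [Module.Finite Λ M] :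
    IsNoetherianRing (Module.End Λ M)ᵐᵒᵖ := by
  let : Module k M := Module.compHom M (algebraMap k Λ)
  have : IsScalarTower k Λ M := IsScalarTower.of_algebraMap_smul fun _ _ => rfl
  have : SMulCommClass Λ k M := ⟨fun l c m => by
    change l • algebraMap k Λ c • m = algebraMap k Λ c • l • m
    rw [← mul_smul, ← mul_smul, Algebra.commutes]⟩
  have : Module.Finite k M := Module.Finite.trans Λ M
  have : FiniteDimensional k (Module.End Λ M) :=
    .of_injective (LinearMap.restrictScalarsₗ k Λ M M k) (LinearMap.restrictScalars_injective k)
  have : FiniteDimensional k (Module.End Λ M)ᵐᵒᵖ := .equiv (MulOpposite.opLinearEquiv k)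
  exact isNoetherian_of_tower k inferInstance

theorem memAb_tensorOver_pi {Λ : Type} [Ring Λ] {M : Type} [AddCommGroup M] [Module Λ M]
    (ι : Type) [Fintype ι] [DecidableEq ι] :
    MemAb Λ M (TensorOver Λ M (ι → (Module.End Λ M)ᵐᵒᵖ)) :=
  ((memAb_self Λ M).pi ι).of_linearEquiv (tensorOverPiEquiv Λ M ι).symm

/-- Let `Λ` be a finite-dimensional algebra and `M` an ab-projective
finite-dimensional `Λ`-module, `Γ = End(M)ᵒᵖ`. Then every finite-dimensional (i.e.
finitely generated) `Γ`-module `X` is `M`-adstatic: the unit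
`ν_X : X → Hom_Λ(M, M ⊗_Γ X)` is an isomorphism; that is, `adstat M = mod Γ(M)`. -/
theorem adstat_eq_mod_of_abProjective
    (k : Type) [Field k] (Λ : Type) [Ring Λ] [Algebra k Λ] [FiniteDimensional k Λ]
    (M : Type) [AddCommGroup M] [Module Λ M] [Module.Finite Λ M]
    (hproj : AbProjective (ModuleCat.of Λ M))
    (X : Type) [AddCommGroup X] [Module (Module.End Λ M)ᵐᵒᵖ X]
    [Module.Finite (Module.End Λ M)ᵐᵒᵖ X] :
    Function.Bijective (adUnit Λ M X) := by
  have := isNoetherianRing_mulOpposite_end k Λ M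
  have := Module.finitePresentation_of_finite (Module.End Λ M)ᵐᵒᵖ X
  obtain ⟨n, m, g, f, hg, hfg⟩ := Module.FinitePresentation.exists_fin' (Module.End Λ M)ᵐᵒᵖ X
  have hTfg := tensorOverMap_exact f g hfg hg
  have hTg := tensorOverMap_surjective g hg
  have hTX := MemAb.of_exact hTfg hTg (memAb_tensorOver_pi _) (memAb_tensorOver_pi _)
  exact AddMonoidHom.bijective_of_surjective_of_bijective_of_right_exact f.toAddMonoidHom
    g.toAddMonoidHom (LinearMap.compRight ℤ (tensorOverMap Λ M _ _ f)).toAddMonoidHom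
    (LinearMap.compRight ℤ (tensorOverMap Λ M _ _ g)).toAddMonoidHom
    (adUnitHom Λ M _) (adUnitHom Λ M _) (adUnitHom Λ M X)
    (AddMonoidHom.ext (tensorOverMap_comp_adUnit f))
    (AddMonoidHom.ext (tensorOverMap_comp_adUnit g)) hfg
    (hproj.exact_compRight hTfg (memAb_tensorOver_pi _) (memAb_tensorOver_pi _) hTX)
    adUnit_pi_bijective.2 adUnit_pi_bijective hg
    (hproj.surjective_compRight hTg (memAb_tensorOver_pi _) hTX)
end

section
/- Every indecomposable module over a Nakayama algebra is ab-projective: if Λ is a finite-dimensional Nakayama algebra with radical J, and M is an indecomposable Λ-module of length t, then M is a projective Λ/J^t-module, hence projective in ab(M). -/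
/-!
A uniserial module `M` of length `t` is killed by `J^t` (the radical kills every simple
composition factor) and is cyclic, hence a quotient `π : Λ/J^t → M`. This surjection splits:
`M` is local, so some indecomposable summand of `Λ/J^t` still maps onto `M`; that summand is
uniserial, its radical layers are semisimple and uniserial, hence of length at most one, so its
length is at most `t` and it maps isomorphically onto `M`. Thus `M` is a retract of `Λ/J^t`,
which is projective among the modules killed by `J^t`, an exact abelian subcategory containing
`ab M`.
-/

open CategoryTheory Limits

section Stmt16
open CategoryTheory Limits

/-- `J(Λ)^t`, the `t`-th power of the Jacobson radical, as a left ideal. -/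
noncomputable def radPow (Λ : Type) [Ring Λ] (t : ℕ) : Ideal Λ :=
  (fun S : Submodule Λ Λ => (Ideal.jacobson (⊥ : Ideal Λ)) • S)^[t] ⊤

theorem radPow_eq_jacobson_pow (Λ : Type) [Ring Λ] (t : ℕ) :
    radPow Λ t = Ring.jacobson Λ ^ t := by
  induction t with
  | zero => exact (Submodule.pow_zero _).trans Ideal.one_eq_top |>.symm
  | succ t ih =>
    rw [radPow, Function.iterate_succ_apply', ← radPow, ih, Ideal.jacobson_bot,
      Ideal.IsTwoSided.pow_succ]
    rfl

section Uniserial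

variable (R : Type*) (M : Type*) [Ring R] [AddCommGroup M] [Module R M]

def IsIndecomposable : Prop :=
  Nontrivial M ∧ ∀ e : Module.End R M, e ∘ₗ e = e → e = 0 ∨ e = LinearMap.id

def IsUniserial : Prop :=
  ∀ U V : Submodule R M, U ≤ V ∨ V ≤ U

variable {R M}

theorem exists_isCompl_ne_top_of_not_isIndecomposable [Nontrivial M]
    (h : ¬ IsIndecomposable R M) : ∃ U V : Submodule R M, IsCompl U V ∧ U ≠ ⊤ ∧ V ≠ ⊤ := by
  obtain ⟨e, he, he0, he1⟩ : ∃ e : Module.End R M, e ∘ₗ e = e ∧ e ≠ 0 ∧ e ≠ LinearMap.id := by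
    simpa [IsIndecomposable, not_or, not_forall, *] using h
  refine ⟨LinearMap.range e, LinearMap.ker e, LinearMap.IsIdempotentElem.isCompl he, ?_, ?_⟩
  · refine fun hrange => he1 (LinearMap.ext fun x => ?_)
    obtain ⟨y, rfl⟩ := LinearMap.range_eq_top.1 hrange x
    exact LinearMap.congr_fun he y
  · exact fun hker => he0 (LinearMap.ker_eq_top.1 hker)

namespace IsUniserial

variable (hM : IsUniserial R M)
include hM

theorem submodule (W : Submodule R M) : IsUniserial R W := fun U V =>
  (hM (U.map W.subtype) (V.map W.subtype)).imp
    (Submodule.map_le_map_iff_of_injective W.injective_subtype U V).1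
    (Submodule.map_le_map_iff_of_injective W.injective_subtype V U).1

theorem quotient (W : Submodule R M) : IsUniserial R (M ⧸ W) := fun U V =>
  (hM (U.comap W.mkQ) (V.comap W.mkQ)).imp
    (Submodule.comap_le_comap_iff_of_surjective W.mkQ_surjective).1
    (Submodule.comap_le_comap_iff_of_surjective W.mkQ_surjective).1

theorem eq_top_or_eq_top_of_sup_eq_top {U V : Submodule R M} (h : U ⊔ V = ⊤) :
    U = ⊤ ∨ V = ⊤ :=
  (hM U V).elim (fun hUV => .inr (by rwa [sup_eq_right.2 hUV] at h))
    (fun hVU => .inl (by rwa [sup_eq_left.2 hVU] at h))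

theorem exists_span_singleton_eq_top [Module.Finite R M] : ∃ x : M, R ∙ x = ⊤ := by
  suffices ∀ T : Finset M, ∃ x : M, Submodule.span R (T : Set M) = R ∙ x by
    obtain ⟨S, hS⟩ := Module.Finite.fg_top (R := R) (M := M)
    obtain ⟨x, hx⟩ := this S
    exact ⟨x, hx ▸ hS⟩
  classical
  intro T
  induction T using Finset.induction_on with
  | empty => exact ⟨0, by simp⟩
  | insert a T _ ih =>
    obtain ⟨x, hx⟩ := ih
    rw [Finset.coe_insert, Submodule.span_insert, hx]
    exact (hM (R ∙ a) (R ∙ x)).elim (fun h => ⟨x, sup_eq_right.2 h⟩)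
      (fun h => ⟨a, sup_eq_left.2 h⟩)

theorem exists_surjective_of_le_annihilator [Module.Finite R M] {I : Ideal R}
    (hI : I ≤ Module.annihilator R M) : ∃ π : (R ⧸ I) →ₗ[R] M, Function.Surjective π := by
  obtain ⟨x, hx⟩ := hM.exists_span_singleton_eq_top
  have hker : I ≤ LinearMap.ker (LinearMap.toSpanSingleton R M x) := fun r hr =>
    Module.mem_annihilator.1 (hI hr) x
  refine ⟨I.liftQ _ hker, ?_⟩
  rw [← LinearMap.range_eq_top, Submodule.range_liftQ, ← LinearMap.span_singleton_eq_range, hx]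

theorem length_le_one [IsSemisimpleModule R M] : Module.length R M ≤ 1 := by
  rcases subsingleton_or_nontrivial M with _ | _
  · simp
  have : IsSimpleOrder (Submodule R M) := ⟨fun U => by
    obtain ⟨V, hUV⟩ := exists_isCompl U
    exact (hM U V).imp (fun h => by simpa [hUV.inf_eq_bot] using (inf_eq_left.2 h).symm)
      (fun h => by simpa [hUV.sup_eq_top] using (sup_eq_left.2 h).symm)⟩
  exact (Module.length_eq_one_iff.2 IsSimpleModule.mk).le

end IsUniserial

end Uniserial

section Jacobson

variable {R M N : Type*} [Ring R] [AddCommGroup M] [Module R M] [AddCommGroup N] [Module R N]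

theorem isSemisimpleModule_of_jacobson_le_annihilator [IsSemiprimaryRing R]
    (h : Ring.jacobson R ≤ Module.annihilator R M) : IsSemisimpleModule R M := by
  have hM : Module.IsTorsionBySet R M (Ring.jacobson R) :=
    (Module.isTorsionBySet_iff_subset_annihilator R M).2 h
  let := hM.module
  exact hM.isSemisimpleModule_iff.1 inferInstance

theorem jacobson_smul_le_of_covBy {A B : Submodule R M} (h : A ⋖ B) :
    Ring.jacobson R • B ≤ A := by
  have : IsSimpleModule R (B ⧸ A.comap B.subtype) :=
    (covBy_iff_quot_is_simple (R := R) h.le).1 h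
  refine Submodule.smul_le.2 fun r hr b hb => ?_
  have := Module.mem_annihilator.1 (IsSemisimpleModule.jacobson_le_annihilator R _ hr)
    (Submodule.Quotient.mk (p := A.comap B.subtype) ⟨b, hb⟩)
  rwa [← Submodule.Quotient.mk_smul, Submodule.Quotient.mk_eq_zero] at this

theorem CompositionSeries.jacobson_pow_smul_last_le_head
    (s : CompositionSeries (Submodule R M)) :
    Ring.jacobson R ^ s.length • s.last ≤ s.head := by
  induction s using RelSeries.inductionOn with
  | singleton x => simp [Submodule.pow_zero, Ideal.one_eq_top]
  | cons s x hx ih =>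
    rw [RelSeries.cons_length, RelSeries.last_cons, RelSeries.head_cons,
      Ideal.IsTwoSided.pow_succ, Submodule.mul_smul]
    exact (smul_mono_right _ ih).trans (jacobson_smul_le_of_covBy hx)

theorem IsUniserial.length_le_of_jacobson_pow_le_annihilator [IsSemiprimaryRing R] {n : ℕ}
    (hM : IsUniserial R M) (h : Ring.jacobson R ^ n ≤ Module.annihilator R M) :
    Module.length R M ≤ n := by
  induction n generalizing M with
  | zero =>
    have : Subsingleton M := Module.annihilator_eq_top_iff.1 <| top_le_iff.1 <| by
      simpa [Submodule.pow_zero, Ideal.one_eq_top] using h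
    simp
  | succ n ih =>
    set W := Ring.jacobson R • (⊤ : Submodule R M)
    have hW : Ring.jacobson R ^ n ≤ Module.annihilator R W := by
      rw [← Submodule.annihilator, Submodule.le_annihilator_iff, ← Submodule.mul_smul,
        ← Submodule.pow_succ, ← Submodule.le_annihilator_iff, Submodule.annihilator_top]
      exact h
    have hQ : Ring.jacobson R ≤ Module.annihilator R (M ⧸ W) := fun r hr =>
      Module.mem_annihilator.2 fun q => by
        obtain ⟨m, rfl⟩ := W.mkQ_surjective q
        rw [← map_smul, Submodule.mkQ_apply, Submodule.Quotient.mk_eq_zero]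
        exact Submodule.smul_mem_smul hr Submodule.mem_top
    have := isSemisimpleModule_of_jacobson_le_annihilator hQ
    rw [Module.length_eq_add_of_exact W.subtype W.mkQ W.injective_subtype W.mkQ_surjective
      (LinearMap.exact_subtype_mkQ W), Nat.cast_succ]
    exact add_le_add (ih (hM.submodule W) hW) (hM.quotient W).length_le_one

theorem LinearMap.injective_of_surjective_of_length_le (f : N →ₗ[R] M)
    (hf : Function.Surjective f) (hlen : Module.length R N ≤ Module.length R M)
    (hfin : Module.length R M ≠ ⊤) : Function.Injective f := by
  rw [Module.length_eq_add_of_exact _ f (LinearMap.ker f).injective_subtype hf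
    (LinearMap.exact_subtype_ker_map f)] at hlen
  have : Subsingleton (LinearMap.ker f) := Module.length_eq_zero_iff.1 <|
    nonpos_iff_eq_zero.1 <| (ENat.add_le_add_iff_right hfin).1 (by simpa using hlen)
  exact LinearMap.ker_eq_bot.1 (Submodule.subsingleton_iff_eq_bot.1 this)

end Jacobson

universe u

theorem exists_rightInverse_of_surjective_of_isUniserial {R : Type*} [Ring R] [IsArtinianRing R]
    {M N : Type u} [AddCommGroup M] [Module R M] [AddCommGroup N] [Module R N]
    [Nontrivial M] [IsNoetherian R N] [IsArtinian R N]
    (hNak : ∀ (X : Type u) [AddCommGroup X] [Module R X], Module.Finite R X →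
      IsIndecomposable R X → IsUniserial R X)
    {n : ℕ} (hM : IsUniserial R M) (hMlen : Module.length R M = n)
    (hN : Ring.jacobson R ^ n ≤ Module.annihilator R N)
    (π : N →ₗ[R] M) (hπ : Function.Surjective π) :
    ∃ σ : M →ₗ[R] N, π ∘ₗ σ = LinearMap.id := by
  suffices ∀ A : Submodule R N, A.map π = ⊤ → ∃ σ : M →ₗ[R] N, π ∘ₗ σ = LinearMap.id from
    this ⊤ (by rw [Submodule.map_top, LinearMap.range_eq_top.2 hπ])
  intro A
  induction A using WellFoundedLT.induction with
  | _ A ih =>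
  intro hA
  have hπA : Function.Surjective (π ∘ₗ A.subtype) := by
    rw [← LinearMap.range_eq_top, LinearMap.range_comp, Submodule.range_subtype, hA]
  by_cases hind : IsIndecomposable R A
  · have hlen : Module.length R A ≤ Module.length R M := hMlen ▸
      (hNak A inferInstance hind).length_le_of_jacobson_pow_le_annihilator
        (hN.trans (A.subtype.annihilator_le_of_injective A.injective_subtype))
    let e := LinearEquiv.ofBijective _ ⟨(π ∘ₗ A.subtype).injective_of_surjective_of_length_le
      hπA hlen (hMlen ▸ ENat.natCast_ne_top n), hπA⟩
    exact ⟨A.subtype ∘ₗ e.symm.toLinearMap, LinearMap.ext e.apply_symm_apply⟩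
  · have : Nontrivial A := hπA.nontrivial
    obtain ⟨U, V, hUV, hU, hV⟩ := exists_isCompl_ne_top_of_not_isIndecomposable hind
    have hlt : ∀ W : Submodule R A, W ≠ ⊤ → W.map A.subtype < A := fun W hW => by
      simpa using
        Submodule.map_strictMono_of_injective A.injective_subtype (lt_top_iff_ne_top.2 hW)
    have hsup : (U.map A.subtype).map π ⊔ (V.map A.subtype).map π = ⊤ := by
      rw [← Submodule.map_sup, ← Submodule.map_sup, hUV.sup_eq_top, Submodule.map_subtype_top,
        hA]
    exact (hM.eq_top_or_eq_top_of_sup_eq_top hsup).elim (ih _ (hlt U hU)) (ih _ (hlt V hV))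

section Relative

variable {C : Type*} [Category C]

theorem ProjIn.of_retract {P : C → Prop} {X Y : C} (hY : ProjIn P Y) (r : Retract X Y)
    (hX : P X) : ProjIn P X := by
  refine ⟨hX, fun A B hA hB e he f => ?_⟩
  obtain ⟨g, hg⟩ := hY.2 A B hA hB e he (r.r ≫ f)
  exact ⟨r.i ≫ g, by rw [Category.assoc, hg, r.retract_assoc]⟩

theorem abProjective_of_projIn [Abelian C] {P : C → Prop} {M : C} (hP : IsExactAbelianSub P)
    (hM : ProjIn P M) : AbProjective M :=
  ⟨fun _ _ h => h, fun X Y hX hY => hM.2 X Y (hX P hP hM.1) (hY P hP hM.1)⟩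

end Relative

section ModuleCat

variable {R : Type*} [Ring R] (I : Ideal R)

theorem isExactAbelianSub_le_annihilator :
    IsExactAbelianSub (fun X : ModuleCat R => I ≤ Module.annihilator R X) where
  iso e h := e.toLinearEquiv.annihilator_eq ▸ h
  zero Z hZ := by
    have := ModuleCat.isZero_iff_subsingleton.1 hZ
    rw [Module.annihilator_eq_top_iff.2 this]
    exact le_top
  ker f hX _ := hX.trans <| (kernel.ι f).hom.annihilator_le_of_injective <|
    (ModuleCat.mono_iff_injective _).1 inferInstance
  coker f _ hY := hY.trans <| (cokernel.π f).hom.annihilator_le_of_surjective <|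
    (ModuleCat.epi_iff_surjective _).1 inferInstance
  sum hX hY := by
    rw [(ModuleCat.biprodIsoProd _ _).toLinearEquiv.annihilator_eq, Module.annihilator_prod]
    exact le_inf hX hY

theorem projIn_quotient [I.IsTwoSided] :
    ProjIn (fun X : ModuleCat R => I ≤ Module.annihilator R X) (ModuleCat.of R (R ⧸ I)) := by
  refine ⟨Ideal.annihilator_quotient.ge, fun X Y hX _ e he f => ?_⟩
  obtain ⟨x, hx⟩ := (ModuleCat.epi_iff_surjective e).1 he (f (Submodule.Quotient.mk 1))
  have hker : I ≤ LinearMap.ker (LinearMap.toSpanSingleton R X x) := fun r hr =>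
    Module.mem_annihilator.1 (hX hr) x
  refine ⟨ModuleCat.ofHom (I.liftQ _ hker),
    ModuleCat.hom_ext <| Submodule.linearMap_qext _ <| LinearMap.ext_ring ?_⟩
  change e.hom (I.liftQ _ hker (Submodule.Quotient.mk 1)) = f.hom (Submodule.Quotient.mk 1)
  rwa [Submodule.liftQ_apply, LinearMap.toSpanSingleton_apply, one_smul]

end ModuleCat

/-- Every indecomposable module over a Nakayama algebra is
ab-projective: if `Λ` is a finite-dimensional Nakayama algebra (every indecomposable
finite-dimensional module is serial, i.e. has linearly ordered submodule lattice) and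
`M` is an indecomposable `Λ`-module of length `t`, then `J^t M = 0`, `M` is a
projective `Λ/J^t`-module (a direct summand of a finite free `Λ/J^t`-module), and `M`
is projective as an object of `ab M`. -/
theorem nakayama_indecomposable_abProjective
    (k : Type) [Field k] (Λ : Type) [Ring Λ] [Algebra k Λ] [FiniteDimensional k Λ]
    (hNak : ∀ (X : Type) [AddCommGroup X] [Module Λ X], Module.Finite Λ X →
      (Nontrivial X ∧ ∀ e : Module.End Λ X, e ∘ₗ e = e → e = 0 ∨ e = LinearMap.id) →
      ∀ U V : Submodule Λ X, U ≤ V ∨ V ≤ U)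
    (M : Type) [AddCommGroup M] [Module Λ M] [Module.Finite Λ M]
    (hMind : Nontrivial M ∧ ∀ e : Module.End Λ M, e ∘ₗ e = e → e = 0 ∨ e = LinearMap.id)
    (t : ℕ) (s : CompositionSeries (Submodule Λ M))
    (hhead : s.head = ⊥) (hlast : s.last = ⊤) (hlen : s.length = t) :
    (radPow Λ t) • (⊤ : Submodule Λ M) = ⊥ ∧
    (∃ (n : ℕ) (i : M →ₗ[Λ] (Fin n → (Λ ⧸ radPow Λ t)))
        (p : (Fin n → (Λ ⧸ radPow Λ t)) →ₗ[Λ] M), p ∘ₗ i = LinearMap.id) ∧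
    AbProjective (ModuleCat.of Λ M) := by
  subst hlen
  have : IsArtinianRing Λ := isArtinian_of_tower k inferInstance
  have : Nontrivial M := hMind.1
  rw [radPow_eq_jacobson_pow]
  set I := Ring.jacobson Λ ^ s.length
  have hann : I • (⊤ : Submodule Λ M) = ⊥ := by
    rw [eq_bot_iff, ← hlast, ← hhead]
    exact s.jacobson_pow_smul_last_le_head
  have hannM : I ≤ Module.annihilator Λ M := by
    rwa [← Submodule.annihilator_top, Submodule.le_annihilator_iff]
  have hM : IsUniserial Λ M := hNak M inferInstance hMind
  obtain ⟨π, hπ⟩ := hM.exists_surjective_of_le_annihilator hannM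
  obtain ⟨σ, hσ⟩ := exists_rightInverse_of_surjective_of_isUniserial hNak hM
    (Module.length_compositionSeries s hhead hlast).symm
    Ideal.annihilator_quotient.ge π hπ
  let e := LinearEquiv.funUnique (Fin 1) Λ (Λ ⧸ I)
  refine ⟨hann, ⟨1, e.symm.toLinearMap ∘ₗ σ, π ∘ₗ e.toLinearMap, ?_⟩, ?_⟩
  · ext m
    simpa using LinearMap.congr_fun hσ m
  · exact abProjective_of_projIn (isExactAbelianSub_le_annihilator I) <|
      (projIn_quotient I).of_retract
        ⟨ModuleCat.ofHom σ, ModuleCat.ofHom π, ModuleCat.hom_ext hσ⟩ hannM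

end Stmt16
end
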